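/- Assume the twisting setup: L/K is I-Galois; A is a subgroup of I that is central in P, normal in I, a nontrivial elementary abelian p-group of order p^a, and irreducible under the μ_m-action; K' is the fixed field of P; and V/K' is an A-Galois extension such that V/K is Galois with group A ⋊_ι μ_m compatibly. If V is not contained in L, then L and V are linearly disjoint over K', i.e. [LV : K'] = p^{e+a}; consequently the fixed field W of the antidiagonal A' = {(a, a⁻¹) : a ∈ A} ⊆ P × A = Gal(LV/K') satisfies [W : K] = |I| = m·p^e. -/

import Mathlib

noncomputable section

open scoped Classical

/-- A normalized discrete valuation `v` with uniformizer `π` on a finite extension `E`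
of the Laurent series field `K = k((u))`: `v` is multiplicative, satisfies the
ultrametric inequality, takes the value `1` at `π`, and extends the normalized `u`-adic
valuation `x ↦ order x` of `K` with ramification index `[E : K]` (the extension is
totally ramified since `k` is algebraically closed). -/
def ValPkg (k : Type) [Field k] (E : Type) [Field E] [Algebra (LaurentSeries k) E]
    (v : E → ℤ) (π : E) : Prop :=
  π ≠ 0 ∧ v π = 1 ∧
    (∀ x y : E, x ≠ 0 → y ≠ 0 → v (x * y) = v x + v y) ∧
    (∀ x y : E, x ≠ 0 → y ≠ 0 → x + y ≠ 0 → min (v x) (v y) ≤ v (x + y)) ∧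
    (∀ x : LaurentSeries k, x ≠ 0 →
      v (algebraMap (LaurentSeries k) E x) =
        (Module.finrank (LaurentSeries k) E : ℤ) * HahnSeries.order x)

section RamificationFiltration

variable {F E : Type*} [Field F] [Field E] [Algebra F E]

/-- The lower-numbering ramification subset `S_c = {g ∈ S | v (g π − π) ≥ c + 1}` of a
(sub)group `S` of automorphisms of a totally ramified extension with normalized
valuation `v` and uniformizer `π` (an automorphism fixing `π` lies in every `S_c`). -/
def lowRG (S : Set (E ≃ₐ[F] E)) (v : E → ℤ) (π : E) (c : ℤ) : Set (E ≃ₐ[F] E) :=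
  {g | g ∈ S ∧ (g π = π ∨ c + 1 ≤ v (g π - π))}

/-- Herbrand's function `φ(c) = ∫₀ᶜ dt/(S₀ : S_t)` at a nonnegative integer `c`,
computed as `(∑_{t=1}^{c} |S_t|)/|S₀|`. -/
def herb (S : Set (E ≃ₐ[F] E)) (v : E → ℤ) (π : E) (c : ℕ) : ℚ :=
  (∑ t ∈ Finset.Icc 1 c, ((lowRG S v π (t : ℤ)).ncard : ℚ)) / ((lowRG S v π 0).ncard : ℚ)

/-- The upper-numbering ramification subset `S^c = S_{ψ(c)}`, where `ψ` is the inverse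
Herbrand function: `S^c = S_t` for the least nonnegative integer `t` with `φ(t) ≥ c`. -/
def uppRG (S : Set (E ≃ₐ[F] E)) (v : E → ℤ) (π : E) (c : ℚ) : Set (E ≃ₐ[F] E) :=
  lowRG S v π ((sInf {t : ℕ | c ≤ herb S v π t} : ℕ) : ℤ)

end RamificationFiltration

/-- `K = k((u))` is trivially a scalar tower over itself (stated explicitly to help
instance resolution for Laurent series fields). -/
instance lsTower (k N : Type) [Field k] [Field N] [Algebra (LaurentSeries k) N] :
    IsScalarTower (LaurentSeries k) (LaurentSeries k) N :=
  IsScalarTower.of_algebraMap_eq fun _ => rfl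

/-- For intermediate fields `K' ≤ V` of an extension `N` of `K = k((u))`, the subgroup
`Gal(V/K') = {g ∈ Gal(V/K) | g fixes K' pointwise}` of `V ≃ₐ[K] V`. -/
def galRel {k N : Type} [Field k] [Field N] [Algebra (LaurentSeries k) N]
    (V K' : IntermediateField (LaurentSeries k) N) (h : K' ≤ V) :
    Subgroup (↥V ≃ₐ[LaurentSeries k] ↥V) where
  carrier := {g | ∀ (x : N) (hx : x ∈ K'), g ⟨x, h hx⟩ = ⟨x, h hx⟩}
  one_mem' := fun x hx => rfl
  mul_mem' := by
    intro g₁ g₂ h₁ h₂ x hx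
    rw [AlgEquiv.mul_apply, h₂ x hx, h₁ x hx]
  inv_mem' := by
    intro g hg x hx
    show g.symm _ = _
    exact (AlgEquiv.symm_apply_eq g).mpr (hg x hx).symm

/-!
The image `T` of `Gal(N/L)` under restriction to `V` lies in `Gal(V/K')` and is normal in
`Gal(V/K)`. Since the identification `Gal(V/K') ≅ A` is compatible with conjugation, `T` becomes a
`μ_m`-stable subgroup of `A`, so by irreducibility either `T = 1`, which forces `V ⊆ L`, or
`T = Gal(V/K')`. In the second case `[LV : K] = [L : K] · |T| = m p^e · p^a`, and every pair in
`P × Gal(V/K')` lifts to `Gal(N/K)`. Hence the preimage in `Gal(N/K)` of the antidiagonal has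
order `p^a · [N : LV]`, and its fixed field `W` has degree `[LV : K] / p^a = m p^e`.
-/

open Module IntermediateField AlgEquiv

namespace Subgroup

variable {G : Type*} [Group G]

theorem card_mul_card_of_sup_eq_top_of_inf_eq_bot {K H : Subgroup G} [K.Normal]
    (hsup : K ⊔ H = ⊤) (hinf : K ⊓ H = ⊥) : Nat.card K * Nat.card H = Nat.card G := by
  rw [← card_mul_index K, ← relIndex_top_right, ← hsup, relIndex_sup_left, ← inf_relIndex_right,
    hinf, relIndex_bot_left]

theorem card_mul_relIndex {H K : Subgroup G} (h : H ≤ K) :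
    Nat.card H * H.relIndex K = Nat.card K := by
  rw [← relIndex_bot_left, ← relIndex_bot_left]
  exact relIndex_mul_relIndex _ _ _ bot_le h

end Subgroup

namespace IntermediateField

variable {F N : Type*} [Field F] [Field N] [Algebra F N]

theorem restrictNormalHom_eq_iff (E : IntermediateField F N) [Normal F E] (g : Gal(N/F))
    (σ : Gal(E/F)) : restrictNormalHom E g = σ ↔ ∀ (y : N) (hy : y ∈ E), g y = σ ⟨y, hy⟩ := by
  simp [AlgEquiv.ext_iff, Subtype.ext_iff, restrictNormalHom_apply]

theorem eq_conj_restrictNormalHom (E : IntermediateField F N) [Normal F E] (g : Gal(N/F))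
    (h h' : Gal(E/F))
    (hg : ∀ (x : N) (hx : x ∈ E) (hgx : g x ∈ E), (h' ⟨g x, hgx⟩ : N) = g (h ⟨x, hx⟩)) :
    h' = restrictNormalHom E g * h * (restrictNormalHom E g)⁻¹ := by
  rw [eq_mul_inv_iff_mul_eq]
  ext ⟨x, hx⟩
  have hgx := restrictNormalHom_apply E g ⟨x, hx⟩
  rw [AlgEquiv.mul_apply, AlgEquiv.mul_apply, restrictNormalHom_apply,
    ← hg x hx (hgx ▸ (restrictNormalHom E g ⟨x, hx⟩).2)]
  congr 2
  exact Subtype.ext hgx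

theorem map_fixingSubgroup_eq_bot_or_le [Normal F N] (E V : IntermediateField F N)
    [Normal F E] [Normal F V] {S : Subgroup Gal(V/F)} {A C : Subgroup Gal(E/F)} (e : S ≃* A)
    (hS : E.fixingSubgroup.map (restrictNormalHom V) ≤ S)
    (he : ∀ (g : Gal(N/F)) (h : S), ∃ h' : S,
      (h' : Gal(V/F)) = restrictNormalHom V g * h * (restrictNormalHom V g)⁻¹ ∧
      (e h' : Gal(E/F)) = restrictNormalHom E g * e h * (restrictNormalHom E g)⁻¹)
    (hirr : ∀ B ≤ A, (∀ c ∈ C, ∀ b ∈ B, c * b * c⁻¹ ∈ B) → B = ⊥ ∨ B = A) :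
    E.fixingSubgroup.map (restrictNormalHom V) = ⊥ ∨
      S ≤ E.fixingSubgroup.map (restrictNormalHom V) := by
  set T := E.fixingSubgroup.map (restrictNormalHom V)
  have hT : T.Normal := (restrictNormalHom_ker E ▸ (restrictNormalHom E).normal_ker).map _
    (restrictNormalHom_surjective (K₁ := V) (E := N))
  let f : S →* Gal(E/F) := A.subtype.comp e.toMonoidHom
  have hf : Function.Injective f := A.subtype_injective.comp e.injective
  let B := (T.subgroupOf S).map f
  have hBA : B ≤ A := by
    rintro _ ⟨h, -, rfl⟩
    exact (e h).2
  have hB : ∀ c ∈ C, ∀ b ∈ B, c * b * c⁻¹ ∈ B := by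
    rintro c - _ ⟨h, hhT, rfl⟩
    obtain ⟨g, rfl⟩ := restrictNormalHom_surjective (K₁ := E) (E := N) c
    obtain ⟨h', hh'V, hh'E⟩ := he g h
    refine ⟨h', ?_, hh'E⟩
    rw [SetLike.mem_coe, Subgroup.mem_subgroupOf, hh'V]
    exact hT.conj_mem _ hhT _
  rcases hirr _ hBA hB with hbot | htop
  · refine Or.inl (eq_bot_iff.mpr fun t ht => ?_)
    have : f ⟨t, hS ht⟩ ∈ B := ⟨_, ht, rfl⟩
    rw [hbot, Subgroup.mem_bot, ← f.map_one] at this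
    exact congrArg Subtype.val (hf this)
  · refine Or.inr fun s hs => ?_
    have : f ⟨s, hs⟩ ∈ B := htop ▸ (e ⟨s, hs⟩).2
    obtain ⟨h, hhT, hfh⟩ := this
    rwa [hf hfh] at hhT

theorem le_of_map_restrictNormalHom_fixingSubgroup_eq_bot [FiniteDimensional F N] [IsGalois F N]
    {E E' : IntermediateField F N} [Normal F E']
    (h : E.fixingSubgroup.map (restrictNormalHom E') = ⊥) : E' ≤ E := by
  rw [Subgroup.map_eq_bot_iff, restrictNormalHom_ker] at h
  rw [← IsGalois.fixedField_fixingSubgroup E, le_iff_le]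
  exact h

theorem finrank_sup_eq_finrank_mul_card_map [IsGalois F N] (E E' : IntermediateField F N)
    [Normal F E'] : finrank F ↥(E ⊔ E') =
      finrank F E * Nat.card (E.fixingSubgroup.map (restrictNormalHom E')) := by
  rw [finrank_eq_fixingSubgroup_index, finrank_eq_fixingSubgroup_index, fixingSubgroup_sup,
    ← Subgroup.relIndex_mul_index inf_le_left, Subgroup.inf_relIndex_left, ← restrictNormalHom_ker,
    Subgroup.relIndex_ker, mul_comm]

theorem exists_restrictNormalHom_eq_and_eq (E E' : IntermediateField F N) [Normal F E]
    [Normal F E'] (g₀ : Gal(N/F)) {τ : Gal(E'/F)}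
    (hτ : (restrictNormalHom E' g₀)⁻¹ * τ ∈ E.fixingSubgroup.map (restrictNormalHom E')) :
    ∃ g : Gal(N/F),
      restrictNormalHom E g = restrictNormalHom E g₀ ∧ restrictNormalHom E' g = τ := by
  obtain ⟨h, hh, hhτ⟩ := hτ
  have hhE : restrictNormalHom E h = 1 := by rwa [← MonoidHom.mem_ker, restrictNormalHom_ker]
  exact ⟨g₀ * h, by simp [hhE], by simp [hhτ]⟩

theorem finrank_fixedField_comap_mul_card [FiniteDimensional F N] [IsGalois F N]
    (E E' : IntermediateField F N) [Normal F E] [Normal F E']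
    {H : Subgroup (Gal(E/F) × Gal(E'/F))}
    (hH : H ≤ ((restrictNormalHom (K₁ := N) E).prod (restrictNormalHom E')).range) :
    finrank F (fixedField (H.comap ((restrictNormalHom (K₁ := N) E).prod (restrictNormalHom E')))) *
      Nat.card H = finrank F ↥(E ⊔ E') := by
  rw [finrank_eq_fixingSubgroup_index, fixingSubgroup_fixedField, Subgroup.index_comap, mul_comm,
    Subgroup.card_mul_relIndex hH, ← Subgroup.index_ker, MonoidHom.ker_prod, restrictNormalHom_ker,
    restrictNormalHom_ker, ← fixingSubgroup_sup, finrank_eq_fixingSubgroup_index]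

theorem finrank_fixedField_antidiagonal_mul_card [FiniteDimensional F N] [IsGalois F N]
    {E E' W : IntermediateField F N} [Normal F E] [Normal F E'] {A : Subgroup Gal(E/F)}
    {S : Subgroup Gal(E'/F)} (e : S ≃* A) (hA : ∀ b c : A, b * c = c * b)
    (hsurj : ∀ b : A, ∃ g : Gal(N/F),
      restrictNormalHom E g = b ∧ restrictNormalHom E' g = e.symm b⁻¹)
    (hW : ∀ x : N, x ∈ W ↔ ∀ g : Gal(N/F),
      (∃ b : A, (∀ (y : N) (hy : y ∈ E), g y = (b : Gal(E/F)) ⟨y, hy⟩) ∧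
        (∀ (y : N) (hy : y ∈ E'), g y = (e.symm b⁻¹ : Gal(E'/F)) ⟨y, hy⟩)) → g x = x) :
    finrank F W * Nat.card A = finrank F ↥(E ⊔ E') := by
  let δ : A →* Gal(E/F) × Gal(E'/F) :=
    MonoidHom.mk' (fun b => (b, e.symm b⁻¹)) fun b c => by
      rw [mul_inv_rev, hA c⁻¹, map_mul]
      rfl
  let ρ : Gal(N/F) →* Gal(E/F) × Gal(E'/F) := (restrictNormalHom E).prod (restrictNormalHom E')
  have hWfix : W = fixedField (δ.range.comap ρ) := by
    ext x
    rw [hW, mem_fixedField_iff]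
    refine forall_congr' fun g => imp_congr ?_ Iff.rfl
    simp only [Subgroup.mem_comap, MonoidHom.mem_range, Prod.ext_iff, ← restrictNormalHom_eq_iff]
    exact exists_congr fun b => and_congr eq_comm eq_comm
  have hδ : δ.range ≤ ρ.range := by
    rintro _ ⟨b, rfl⟩
    obtain ⟨g, hg⟩ := hsurj b
    exact ⟨g, Prod.ext hg.1 hg.2⟩
  rw [hWfix, ← finrank_fixedField_comap_mul_card E E' hδ,
    Nat.card_congr (MonoidHom.ofInjective (f := δ) fun b c hbc =>
      Subtype.ext (congrArg Prod.fst hbc)).toEquiv]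

end IntermediateField

section GaloisRelative

variable {k N : Type} [Field k] [Field N] [Algebra (LaurentSeries k) N]

theorem restrictNormalHom_mem_galRel_iff {E K' : IntermediateField (LaurentSeries k) N}
    [Normal (LaurentSeries k) E] (h : K' ≤ E) (g : Gal(N/LaurentSeries k)) :
    restrictNormalHom E g ∈ galRel E K' h ↔ g ∈ K'.fixingSubgroup := by
  simp [galRel, Subtype.ext_iff, restrictNormalHom_apply]

theorem map_fixingSubgroup_le_galRel {E V K' : IntermediateField (LaurentSeries k) N}
    [Normal (LaurentSeries k) V] (hK'E : K' ≤ E) (hK'V : K' ≤ V) :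
    E.fixingSubgroup.map (restrictNormalHom V) ≤ galRel V K' hK'V := by
  rintro _ ⟨g, hg, rfl⟩
  exact (restrictNormalHom_mem_galRel_iff hK'V g).mpr (fixingSubgroup_le hK'E hg)

end GaloisRelative

theorem twist_connected_of_not_dominated_general
    (p m e a : ℕ)
    (k : Type) [Field k]
    (N : Type) [Field N] [Algebra (LaurentSeries k) N]
    [FiniteDimensional (LaurentSeries k) N] [IsGalois (LaurentSeries k) N]
    (L V K' W : IntermediateField (LaurentSeries k) N)
    [IsGalois (LaurentSeries k) ↥L] [IsGalois (LaurentSeries k) ↥V]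
    (hK'L : K' ≤ L) (hK'V : K' ≤ V)
    -- the identification Gal(L/K) = I = P ⋊_ι μ_m, internally
    (P C : Subgroup (↥L ≃ₐ[LaurentSeries k] ↥L))
    (hPcard : Nat.card P = p ^ e) (hPnormal : P.Normal)
    (hCcard : Nat.card C = m)
    (hPC : P ⊓ C = ⊥) (hPCtop : P ⊔ C = ⊤)
    -- K' is the fixed field of P
    (hK'fix : ∀ (x : N) (hx : x ∈ L), x ∈ K' ↔ ∀ g ∈ P, g ⟨x, hx⟩ = ⟨x, hx⟩)
    -- the subgroup A
    (A : Subgroup (↥L ≃ₐ[LaurentSeries k] ↥L))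
    (hAP : A ≤ P)
    (hAcentral : ∀ x ∈ A, ∀ g ∈ P, x * g = g * x)
    (hAcard : Nat.card A = p ^ a)
    (hAirred : ∀ B : Subgroup (↥L ≃ₐ[LaurentSeries k] ↥L),
      B ≤ A → (∀ c ∈ C, ∀ b ∈ B, c * b * c⁻¹ ∈ B) → B = ⊥ ∨ B = A)
    -- V/K' is A-Galois (identification eV), V/K Galois with group A ⋊_ι μ_m compatibly
    (eV : ↥(galRel V K' hK'V) ≃* ↥A)
    (hcompat : ∀ (g : N ≃ₐ[LaurentSeries k] N) (h : ↥(galRel V K' hK'V)),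
      ∃ h' : ↥(galRel V K' hK'V),
        (∀ (x : N) (hx : x ∈ V) (hgx : g x ∈ V),
          (((h' : ↥V ≃ₐ[LaurentSeries k] ↥V) ⟨g x, hgx⟩ : ↥V) : N) =
            g ((((h : ↥V ≃ₐ[LaurentSeries k] ↥V)) ⟨x, hx⟩ : N))) ∧
        ((eV h' : ↥L ≃ₐ[LaurentSeries k] ↥L) =
          AlgEquiv.restrictNormalHom ↥L g * ↑(eV h) *
            (AlgEquiv.restrictNormalHom (F := LaurentSeries k) (K₁ := N) ↥L g)⁻¹))
    -- W is the fixed field of the antidiagonal A' = {(a, a⁻¹)} ⊆ P × A = Gal(LV/K')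
    (hW : ∀ x : N, x ∈ W ↔ ∀ g : N ≃ₐ[LaurentSeries k] N,
      (∃ b : ↥A,
        (∀ (y : N) (hy : y ∈ L), g y = ↑((↑b : ↥L ≃ₐ[LaurentSeries k] ↥L) ⟨y, hy⟩)) ∧
        (∀ (y : N) (hy : y ∈ V),
          g y = ↑((↑(eV.symm b⁻¹) : ↥V ≃ₐ[LaurentSeries k] ↥V) ⟨y, hy⟩))) →
      g x = x)
    -- V is not contained in L
    (hVL : ¬ V ≤ L) :
    Module.finrank (LaurentSeries k) ↥(L ⊔ V) = m * p ^ (e + a) ∧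
    Module.finrank (LaurentSeries k) ↥W = m * p ^ e := by
  have hTS := map_fixingSubgroup_le_galRel hK'L hK'V
  have hT : L.fixingSubgroup.map (restrictNormalHom V) = galRel V K' hK'V := by
    rcases map_fixingSubgroup_eq_bot_or_le L V eV hTS (fun g h => (hcompat g h).imp
        fun h' hh' => ⟨eq_conj_restrictNormalHom V g h h' hh'.1, hh'.2⟩) hAirred with hbot | hle
    · exact absurd (le_of_map_restrictNormalHom_fixingSubgroup_eq_bot hbot) hVL
    · exact le_antisymm hTS hle
  have hLV : finrank (LaurentSeries k) ↥(L ⊔ V) = m * p ^ (e + a) := by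
    rw [finrank_sup_eq_finrank_mul_card_map, hT, Nat.card_congr eV.toEquiv, hAcard,
      ← IsGalois.card_aut_eq_finrank,
      ← Subgroup.card_mul_card_of_sup_eq_top_of_inf_eq_bot hPCtop hPC, hPcard, hCcard]
    ring
  have hsurj (b : A) : ∃ g : Gal(N/LaurentSeries k),
      restrictNormalHom L g = b ∧ restrictNormalHom V g = eV.symm b⁻¹ := by
    obtain ⟨g₀, hg₀⟩ := restrictNormalHom_surjective (K₁ := L) (E := N) (b : Gal(L/LaurentSeries k))
    have hg₀K' : g₀ ∈ K'.fixingSubgroup := (restrictNormalHom_mem_galRel_iff hK'L g₀).mp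
      (hg₀ ▸ fun x hx => (hK'fix x (hK'L hx)).mp hx b (hAP b.2))
    rw [← hg₀]
    refine exists_restrictNormalHom_eq_and_eq L V g₀ ?_
    rw [hT]
    exact mul_mem (inv_mem ((restrictNormalHom_mem_galRel_iff hK'V g₀).mpr hg₀K')) (eV.symm b⁻¹).2
  have hWA := finrank_fixedField_antidiagonal_mul_card eV
    (fun b c => Subtype.ext (hAcentral b b.2 c (hAP c.2))) hsurj hW
  rw [hLV, hAcard, pow_add] at hWA
  exact ⟨hLV, Nat.eq_of_mul_eq_mul_right (hAcard ▸ Nat.card_pos) (by rw [hWA]; ring)⟩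

set_option maxHeartbeats 1000000 in
set_option synthInstance.maxHeartbeats 1000000 in
/-- **Connectedness of the twist.**  In the twisting setup (`L/K` an `I`-Galois
extension, `I = P ⋊_ι μ_m` internally with `|P| = p^e` and `|C| = m`; `A` a subgroup
of `I` central in `P`, normal in `I`, nontrivial elementary abelian of order `p^a`,
irreducible under the `μ_m`-action; `K'` the fixed field of `P`; `V/K'` an `A`-Galois
extension, identification `eV`, such that `V/K` is Galois with group `A ⋊_ι μ_m`
compatibly), if `V` is not contained in `L`, then `L` and `V` are linearly disjoint
over `K'`, i.e. `[LV : K'] = p^{e+a}` (equivalently `[LV : K] = m·p^{e+a}`);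
consequently the fixed field `W` of the antidiagonal
`A' = {(a, a⁻¹) : a ∈ A} ⊆ P × A = Gal(LV/K')` satisfies `[W : K] = |I| = m·p^e`. -/
theorem twist_connected_of_not_dominated
    (p m e a : ℕ) (hp : p.Prime) (hm : 0 < m) (he : 0 < e) (ha : 0 < a) (hae : a ≤ e)
    (hpm : ¬ p ∣ m)
    (k : Type) [Field k] [IsAlgClosed k] [CharP k p]
    (N : Type) [Field N] [Algebra (LaurentSeries k) N]
    [FiniteDimensional (LaurentSeries k) N] [IsGalois (LaurentSeries k) N]
    (L V K' W : IntermediateField (LaurentSeries k) N)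
    [IsGalois (LaurentSeries k) ↥L] [IsGalois (LaurentSeries k) ↥V]
    (hK'L : K' ≤ L) (hK'V : K' ≤ V)
    -- the identification Gal(L/K) = I = P ⋊_ι μ_m, internally
    (P C : Subgroup (↥L ≃ₐ[LaurentSeries k] ↥L))
    (hPcard : Nat.card P = p ^ e) (hPnormal : P.Normal)
    (hCcard : Nat.card C = m) (hCcyc : IsCyclic ↥C)
    (hPC : P ⊓ C = ⊥) (hPCtop : P ⊔ C = ⊤)
    -- K' is the fixed field of P
    (hK'fix : ∀ (x : N) (hx : x ∈ L), x ∈ K' ↔ ∀ g ∈ P, g ⟨x, hx⟩ = ⟨x, hx⟩)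
    -- the subgroup A
    (A : Subgroup (↥L ≃ₐ[LaurentSeries k] ↥L))
    (hAP : A ≤ P)
    (hAcentral : ∀ x ∈ A, ∀ g ∈ P, x * g = g * x)
    (hAnormal : A.Normal)
    (hAbot : A ≠ ⊥)
    (hAelem : ∀ x ∈ A, x ^ p = 1)
    (hAcard : Nat.card A = p ^ a)
    (hAirred : ∀ B : Subgroup (↥L ≃ₐ[LaurentSeries k] ↥L),
      B ≤ A → (∀ c ∈ C, ∀ b ∈ B, c * b * c⁻¹ ∈ B) → B = ⊥ ∨ B = A)
    -- V/K' is A-Galois (identification eV), V/K Galois with group A ⋊_ι μ_m compatibly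
    (hVrank : Module.finrank (LaurentSeries k) ↥V = m * p ^ a)
    (eV : ↥(galRel V K' hK'V) ≃* ↥A)
    (hcompat : ∀ (g : N ≃ₐ[LaurentSeries k] N) (h : ↥(galRel V K' hK'V)),
      ∃ h' : ↥(galRel V K' hK'V),
        (∀ (x : N) (hx : x ∈ V) (hgx : g x ∈ V),
          (((h' : ↥V ≃ₐ[LaurentSeries k] ↥V) ⟨g x, hgx⟩ : ↥V) : N) =
            g ((((h : ↥V ≃ₐ[LaurentSeries k] ↥V)) ⟨x, hx⟩ : N))) ∧
        ((eV h' : ↥L ≃ₐ[LaurentSeries k] ↥L) =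
          AlgEquiv.restrictNormalHom ↥L g * ↑(eV h) *
            (AlgEquiv.restrictNormalHom (F := LaurentSeries k) (K₁ := N) ↥L g)⁻¹))
    -- W is the fixed field of the antidiagonal A' = {(a, a⁻¹)} ⊆ P × A = Gal(LV/K')
    (hW : ∀ x : N, x ∈ W ↔ ∀ g : N ≃ₐ[LaurentSeries k] N,
      (∃ b : ↥A,
        (∀ (y : N) (hy : y ∈ L), g y = ↑((↑b : ↥L ≃ₐ[LaurentSeries k] ↥L) ⟨y, hy⟩)) ∧
        (∀ (y : N) (hy : y ∈ V),
          g y = ↑((↑(eV.symm b⁻¹) : ↥V ≃ₐ[LaurentSeries k] ↥V) ⟨y, hy⟩))) →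
      g x = x)
    -- V is not contained in L
    (hVL : ¬ V ≤ L) :
    Module.finrank (LaurentSeries k) ↥(L ⊔ V) = m * p ^ (e + a) ∧
    Module.finrank (LaurentSeries k) ↥W = m * p ^ e :=
  twist_connected_of_not_dominated_general p m e a k N L V K' W hK'L hK'V P C hPcard hPnormal hCcard
    hPC hPCtop hK'fix A hAP hAcentral hAcard hAirred eV hcompat hW hVL
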